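/- arXiv:2008.08825 — 6 statements merged into one kernel-verified Lean document; each statement's English description precedes it below -/
import Mathlib

section
/- Let H be a 2n×2n complex matrix satisfying J Hᴴ J = H (skew-adjoint with respect to the sesquilinear form induced by J) and Σ Hᴴ Σ = H (self-adjoint with respect to the sesquilinear form induced by Σ). If λ ∈ ℂ is an eigenvalue of H, then -λ, conj(λ) and -conj(λ) are also eigenvalues of H; i.e., the eigenvalues of H come in quadruples (λ, conj(λ), -λ, -conj(λ)), which collapse to pairs (λ, -λ) when λ is real or purely imaginary. -/
open Matrix

private lemma eig_iff_det {n : ℕ} (M : Matrix (Fin n ⊕ Fin n) (Fin n ⊕ Fin n) ℂ) (μ : ℂ) :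
    (∃ v : Fin n ⊕ Fin n → ℂ, v ≠ 0 ∧ M *ᵥ v = μ • v) ↔ (M - μ • 1).det = 0 := by
  rw [← Matrix.exists_mulVec_eq_zero_iff]
  constructor
  · rintro ⟨v, hv, hMv⟩
    exact ⟨v, hv, by rw [Matrix.sub_mulVec, Matrix.smul_mulVec, Matrix.one_mulVec, hMv,
      sub_self]⟩
  · rintro ⟨v, hv, hMv⟩
    refine ⟨v, hv, ?_⟩
    rw [Matrix.sub_mulVec, Matrix.smul_mulVec, Matrix.one_mulVec, sub_eq_zero] at hMv
    exact hMv

/-- If `H` satisfies `J Hᴴ J = H` and `Σ Hᴴ Σ = H`, then the eigenvalues of `H`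
come in quadruples `(λ, conj(λ), -λ, -conj(λ))`. -/
theorem bse_eigenvalue_quadruples
    (n : ℕ) (H J Sgm : Matrix (Fin n ⊕ Fin n) (Fin n ⊕ Fin n) ℂ)
    (hJ : J = fromBlocks 0 1 (-1) 0)
    (hS : Sgm = fromBlocks 1 0 0 (-1))
    (hskew : J * Hᴴ * J = H)
    (hself : Sgm * Hᴴ * Sgm = H)
    (lam : ℂ)
    (hlam : ∃ v : Fin n ⊕ Fin n → ℂ, v ≠ 0 ∧ H *ᵥ v = lam • v) :
    (∃ v : Fin n ⊕ Fin n → ℂ, v ≠ 0 ∧ H *ᵥ v = (-lam) • v) ∧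
    (∃ v : Fin n ⊕ Fin n → ℂ, v ≠ 0 ∧ H *ᵥ v = (starRingEnd ℂ lam) • v) ∧
    (∃ v : Fin n ⊕ Fin n → ℂ, v ≠ 0 ∧ H *ᵥ v = (-(starRingEnd ℂ lam)) • v) := by
  have hS2 : Sgm * Sgm = 1 := by
    rw [hS, Matrix.fromBlocks_multiply]
    simp [← Matrix.fromBlocks_one]
  have hJ2 : J * J = -1 := by
    rw [hJ, Matrix.fromBlocks_multiply]
    have h1 : (-1 : Matrix (Fin n ⊕ Fin n) (Fin n ⊕ Fin n) ℂ) =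
        fromBlocks (-1) 0 0 (-1) := by
      ext i j
      rcases i with i | i <;> rcases j with j | j <;>
        simp [Matrix.one_apply, Sum.inl.injEq, Sum.inr.injEq]
    rw [h1]
    simp
  have hdetS : Sgm.det * Sgm.det = 1 := by
    rw [← Matrix.det_mul, hS2, Matrix.det_one]
  have hdetJ : J.det * J.det = 1 := by
    rw [← Matrix.det_mul, hJ2]
    have : ((-1 : Matrix (Fin n ⊕ Fin n) (Fin n ⊕ Fin n) ℂ)).det
        = (-1 : ℂ) ^ (Fintype.card (Fin n ⊕ Fin n)) := by
      rw [Matrix.det_neg, Matrix.det_one, mul_one]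
    rw [this]
    refine Even.neg_one_pow ?_
    simp [Fintype.card_sum]
  -- (A): det(H - μ) = det(Hᴴ - μ)
  have hA : ∀ μ : ℂ, (H - μ • 1).det = (Hᴴ - μ • 1).det := by
    intro μ
    have hEq : H - μ • 1 = Sgm * (Hᴴ - μ • 1) * Sgm := by
      rw [Matrix.mul_sub, Matrix.sub_mul, hself]
      congr 1
      rw [mul_smul_comm, smul_mul_assoc, mul_one, hS2]
    rw [hEq, Matrix.det_mul, Matrix.det_mul]
    linear_combination (Hᴴ - μ • 1).det * hdetS
  -- (B): det(H - μ) = det(Hᴴ + μ)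
  have hB : ∀ μ : ℂ, (H - μ • 1).det = (Hᴴ + μ • 1).det := by
    intro μ
    have hEq : H - μ • 1 = J * (Hᴴ + μ • 1) * J := by
      rw [Matrix.mul_add, Matrix.add_mul, hskew]
      congr 1
      rw [mul_smul_comm, smul_mul_assoc, mul_one, hJ2, smul_neg, sub_eq_add_neg]
    rw [hEq, Matrix.det_mul, Matrix.det_mul]
    linear_combination (Hᴴ + μ • 1).det * hdetJ
  -- (C): det(Hᴴ - μ) = conj (det (H - conj μ))
  have hC : ∀ μ : ℂ, (Hᴴ - μ • 1).det = (starRingEnd ℂ) ((H - (starRingEnd ℂ) μ • 1).det) := by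
    intro μ
    have : Hᴴ - μ • 1 = (H - (starRingEnd ℂ) μ • 1)ᴴ := by
      rw [Matrix.conjTranspose_sub, Matrix.conjTranspose_smul, Matrix.conjTranspose_one]
      simp
    rw [this, Matrix.det_conjTranspose]
    rfl
  rw [eig_iff_det] at hlam
  have hconj : (H - (starRingEnd ℂ) lam • 1).det = 0 := by
    rw [hA]
    have := hC (starRingEnd ℂ lam)
    simp only [RingHomCompTriple.comp_apply, RingHom.id_apply, Complex.conj_conj,
      starRingEnd_self_apply] at this
    rw [this, hlam, map_zero]
  refine ⟨?_, ?_, ?_⟩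
  · rw [eig_iff_det, hB, neg_smul, ← sub_eq_add_neg, ← hA, hlam]
  · rw [eig_iff_det]; exact hconj
  · rw [eig_iff_det, hB, neg_smul, ← sub_eq_add_neg, ← hA, hconj]
end

section
/- Let σ : {1,…,n} → ℝ take only the values +1 and -1, let Σ = diag(σ₁,…,σₙ), and let p be the number of indices i with σᵢ = +1. Let H be an n×n complex matrix such that Σ·H is Hermitian positive definite. Then H is diagonalizable with real eigenvalues: there exist an invertible matrix X ∈ ℂ^{n×n} and real numbers d₁,…,dₙ such that X⁻¹·H·X = diag(d₁,…,dₙ), and exactly p of the dᵢ are positive while the remaining n-p are negative. -/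
/-!
Since `A = Σ H` is positive definite, it has a positive definite square root `B`, and
`H = Σ B²` is similar to the Hermitian matrix `B Σ B = U D Uᴴ` (`U` unitary, `D` real diagonal).
Hence `X = B⁻¹ U` diagonalizes `H`, and the same computation gives `D = (B U)ᴴ Σ (B U)`, so `D`
is congruent to `Σ` and Sylvester's law of inertia transfers the sign counts of `σ` to `D`.
-/

open Matrix ComplexOrder
open Finset

section

variable {ι κ 𝕜 : Type*} [Fintype ι] [Fintype κ] [RCLike 𝕜]

theorem star_dotProduct_diagonal_ofReal_mulVec [DecidableEq ι] (a : ι → ℝ) (v : ι → 𝕜) :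
    star v ⬝ᵥ (diagonal (fun i => (a i : 𝕜)) *ᵥ v) = ((∑ i, a i * ‖v i‖ ^ 2 : ℝ) : 𝕜) := by
  simp only [dotProduct, mulVec_diagonal, Pi.star_apply, RCLike.star_def, RCLike.ofReal_sum,
    RCLike.ofReal_mul, RCLike.ofReal_pow, ← RCLike.conj_mul]
  exact sum_congr rfl fun i _ => by ring

theorem sum_mul_norm_sq_pos {a : ι → ℝ} {v : ι → 𝕜} (hv : v ≠ 0) (ha : ∀ i, a i ≤ 0 → v i = 0) :
    0 < ∑ i, a i * ‖v i‖ ^ 2 := by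
  obtain ⟨j, hj⟩ := Function.ne_iff.mp hv
  refine sum_pos' (fun i _ => ?_) ⟨j, mem_univ _, ?_⟩
  · by_cases hi : a i ≤ 0
    · simp [ha i hi]
    · exact mul_nonneg (not_le.mp hi).le (sq_nonneg _)
  · have : 0 < a j := not_le.mp fun h => hj (ha j h)
    positivity

theorem sum_mul_norm_sq_nonpos {a : ι → ℝ} {v : ι → 𝕜} (ha : ∀ i, 0 < a i → v i = 0) :
    ∑ i, a i * ‖v i‖ ^ 2 ≤ 0 := by
  refine sum_nonpos fun i _ => ?_
  by_cases hi : 0 < a i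
  · simp [ha i hi]
  · exact mul_nonpos_of_nonpos_of_nonneg (not_lt.mp hi) (sq_nonneg _)

theorem card_pos_le_of_diagonal_eq_conjTranspose_mul_diagonal_mul [DecidableEq ι] [DecidableEq κ]
    {μ : ι → ℝ} {ν : κ → ℝ} {C : Matrix ι κ 𝕜}
    (h : diagonal (fun k => (ν k : 𝕜)) = Cᴴ * diagonal (fun i => (μ i : 𝕜)) * C) :
    #{k | 0 < ν k} ≤ #{i | 0 < μ i} := by
  by_contra! hlt
  -- Otherwise a dimension count gives `x ≠ 0` supported on `{ν > 0}` with `C x` vanishing on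
  -- `{μ > 0}`, and the quadratic form `xᴴ diag ν x = (C x)ᴴ diag μ (C x)` is both `> 0` and `≤ 0`.
  let E := Function.ExtendByZero.linearMap 𝕜 (Subtype.val : {k // 0 < ν k} → κ)
  let F := LinearMap.funLeft 𝕜 𝕜 (Subtype.val : {i // 0 < μ i} → ι) ∘ₗ C.mulVecLin ∘ₗ E
  obtain ⟨c, hc, hc0⟩ := Submodule.exists_mem_ne_zero_of_ne_bot <|
    LinearMap.ker_ne_bot_of_finrank_lt (f := F) (by simpa [Fintype.card_subtype] using hlt)
  set x := E c
  have hx0 : x ≠ 0 :=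
    (map_ne_zero_iff E (Function.extend_injective Subtype.val_injective (0 : κ → 𝕜))).mpr hc0
  have hxν : ∀ k, ν k ≤ 0 → x k = 0 := fun k hk =>
    Function.extend_apply' _ _ _ fun ⟨k', hk'⟩ => (not_lt.mpr hk) (hk' ▸ k'.2)
  have hyμ : ∀ i, 0 < μ i → (C *ᵥ x) i = 0 := fun i hi =>
    congrFun (LinearMap.mem_ker.mp hc) ⟨i, hi⟩
  have hquad : ∑ k, ν k * ‖x k‖ ^ 2 = ∑ i, μ i * ‖(C *ᵥ x) i‖ ^ 2 := by
    have : star x ⬝ᵥ (diagonal (fun k => (ν k : 𝕜)) *ᵥ x)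
        = star (C *ᵥ x) ⬝ᵥ (diagonal (fun i => (μ i : 𝕜)) *ᵥ (C *ᵥ x)) := by
      rw [h, ← mulVec_mulVec, ← mulVec_mulVec, dotProduct_mulVec, ← star_mulVec]
    simpa only [star_dotProduct_diagonal_ofReal_mulVec, RCLike.ofReal_inj] using this
  exact (sum_mul_norm_sq_pos hx0 hxν).not_ge (hquad ▸ sum_mul_norm_sq_nonpos hyμ)

theorem card_pos_eq_of_diagonal_eq_conjTranspose_mul_diagonal_mul [DecidableEq ι]
    {μ ν : ι → ℝ} {C : Matrix ι ι 𝕜} (hC : IsUnit C)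
    (h : diagonal (fun i => (ν i : 𝕜)) = Cᴴ * diagonal (fun i => (μ i : 𝕜)) * C) :
    #{i | 0 < ν i} = #{i | 0 < μ i} := by
  have hCh : IsUnit Cᴴ := (isUnit_conjTranspose C).mpr hC
  refine (card_pos_le_of_diagonal_eq_conjTranspose_mul_diagonal_mul h).antisymm
    (card_pos_le_of_diagonal_eq_conjTranspose_mul_diagonal_mul (C := C⁻¹) ?_)
  rw [h, conjTranspose_nonsing_inv, mul_assoc, mul_assoc,
    mul_nonsing_inv _ ((isUnit_iff_isUnit_det C).mp hC), mul_one,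
    nonsing_inv_mul_cancel_left _ _ ((isUnit_iff_isUnit_det _).mp hCh)]

theorem card_neg_eq_of_diagonal_eq_conjTranspose_mul_diagonal_mul [DecidableEq ι]
    {μ ν : ι → ℝ} {C : Matrix ι ι 𝕜} (hC : IsUnit C)
    (h : diagonal (fun i => (ν i : 𝕜)) = Cᴴ * diagonal (fun i => (μ i : 𝕜)) * C) :
    #{i | ν i < 0} = #{i | μ i < 0} := by
  have hneg : diagonal (fun i => ((-ν i : ℝ) : 𝕜))
      = Cᴴ * diagonal (fun i => ((-μ i : ℝ) : 𝕜)) * C := by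
    simp only [RCLike.ofReal_neg, ← diagonal_neg, h, mul_neg, neg_mul]
  simpa only [neg_pos] using card_pos_eq_of_diagonal_eq_conjTranspose_mul_diagonal_mul hC hneg

theorem exists_diagonal_similar_and_congruent_of_posDef [DecidableEq ι] {S A : Matrix ι ι 𝕜}
    (hS : S.IsHermitian) (hA : A.PosDef) :
    ∃ X : Matrix ι ι 𝕜, IsUnit X ∧ ∃ d : ι → ℝ,
      X⁻¹ * (S * A) * X = diagonal (fun i => (d i : 𝕜)) ∧
      diagonal (fun i => (d i : 𝕜)) = (A * X)ᴴ * S * (A * X) := by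
  open scoped MatrixOrder in
  obtain ⟨B, hB, rfl⟩ : ∃ B : Matrix ι ι 𝕜, B.PosDef ∧ A = B * B :=
    ⟨CFC.sqrt A, (IsStrictlyPositive.sqrt A hA.isStrictlyPositive).posDef,
      (CFC.sqrt_mul_sqrt_self A hA.posSemidef.nonneg).symm⟩
  have hBdet : IsUnit B.det := (isUnit_iff_isUnit_det B).mp hB.isUnit
  have hM : (B * S * B).IsHermitian := by
    simpa only [hB.isHermitian.eq] using isHermitian_conjTranspose_mul_mul B hS
  set U : Matrix ι ι 𝕜 := (hM.eigenvectorUnitary : Matrix ι ι 𝕜)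
  have hdiag : star U * (B * S * B) * U = diagonal (fun i => (hM.eigenvalues i : 𝕜)) :=
    (Unitary.conjStarAlgAut_star_apply _ _).symm.trans hM.conjStarAlgAut_star_eigenvectorUnitary
  refine ⟨B⁻¹ * U, ?_, hM.eigenvalues, ?_, ?_⟩
  · exact hB.inv.isUnit.mul Unitary.isUnit_coe
  · have hUinv : U⁻¹ = star U := inv_eq_left_inv (Unitary.coe_star_mul_self _)
    rw [Matrix.mul_inv_rev, hUinv, nonsing_inv_nonsing_inv B hBdet, ← hdiag]
    simp only [mul_assoc, mul_nonsing_inv_cancel_left B U hBdet]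
  · have hBU : B * B * (B⁻¹ * U) = B * U := by
      rw [mul_assoc, mul_nonsing_inv_cancel_left B U hBdet]
    rw [hBU, conjTranspose_mul, hB.isHermitian.eq, ← star_eq_conjTranspose, ← hdiag]
    simp only [mul_assoc]

end

/-- If `Σ = diag(σ₁,…,σₙ)` is a signature matrix with `p` positive entries and
`Σ H` is Hermitian positive definite, then `H` is diagonalizable with real
eigenvalues, of which exactly `p` are positive and `n - p` are negative. -/
theorem signature_posdef_diagonalizable
    (n : ℕ) (σ : Fin n → ℝ) (hσ : ∀ i, σ i = 1 ∨ σ i = -1)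
    (p : ℕ) (hp : p = (Finset.univ.filter fun i => σ i = 1).card)
    (H : Matrix (Fin n) (Fin n) ℂ)
    (hpd : (Matrix.diagonal (fun i => (σ i : ℂ)) * H).PosDef) :
    ∃ X : Matrix (Fin n) (Fin n) ℂ, IsUnit X ∧
      ∃ d : Fin n → ℝ,
        X⁻¹ * H * X = Matrix.diagonal (fun i => (d i : ℂ)) ∧
        (Finset.univ.filter fun i => 0 < d i).card = p ∧
        (Finset.univ.filter fun i => d i < 0).card = n - p := by
  set S := diagonal (fun i => (σ i : ℂ))
  have hS : S.IsHermitian := isHermitian_diagonal_of_self_adjoint _ <| by ext i; simp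
  have hSS : S * S = 1 := by
    rw [diagonal_mul_diagonal, ← diagonal_one]
    congr 1; ext i; rcases hσ i with h | h <;> simp [h]
  obtain ⟨X, hX, d, hsim, hcong⟩ := exists_diagonal_similar_and_congruent_of_posDef hS hpd
  rw [← mul_assoc S S H, hSS, one_mul] at hsim
  have hSHX : IsUnit (S * H * X) := hpd.isUnit.mul hX
  have hσpos : #{i | 0 < σ i} = p := by
    rw [hp]; congr 1; ext i; rcases hσ i with h | h <;> norm_num [h]
  have hσneg : #{i | σ i < 0} = n - p := by
    have hnot : #{i | σ i < 0} = #{i | ¬ 0 < σ i} := by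
      congr 1; ext i; rcases hσ i with h | h <;> norm_num [h]
    have hsplit := card_filter_add_card_filter_not (s := univ) (fun i => 0 < σ i)
    rw [card_univ, Fintype.card_fin] at hsplit
    omega
  refine ⟨X, hX, d, hsim, ?_, ?_⟩
  · rw [card_pos_eq_of_diagonal_eq_conjTranspose_mul_diagonal_mul hSHX hcong, hσpos]
  · rw [card_neg_eq_of_diagonal_eq_conjTranspose_mul_diagonal_mul hSHX hcong, hσneg]
end

section
/- Let H = [[A, B], [-B, -A]] be a BSE matrix of form I (A = Aᴴ, B = Bᴴ, A, B ∈ ℂ^{n×n}) such that Σ·H = [[A, B], [B, A]] is positive definite. Then every eigenvalue λ of H is real, and if v = (v⁽¹⁾, v⁽²⁾) ∈ ℂ^{2n} satisfies H·v = λ·v, then the flipped vector y = (v⁽²⁾, v⁽¹⁾), i.e. y = F·v with F = [[0, Iₙ], [Iₙ, 0]], satisfies H·y = (-λ)·y. -/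
open Matrix ComplexOrder

/-! With `Σ = diag(I, -I)` and `M = Σ H = [[A, B], [B, A]]`, an eigenpair `H v = λ v` gives
`M v = λ Σ v`. Taking the quadratic form with `v`, `vᴴ M v > 0` and `vᴴ Σ v` is real, so `λ`
is a quotient of two real numbers. The flip `F` anticommutes with `H`, which sends `λ` to `-λ`. -/

namespace Matrix

theorem PosDef.im_eq_zero_of_mulVec_eq_smul_mulVec {ι 𝕜 : Type*} [Fintype ι] [RCLike 𝕜]
    {M S : Matrix ι ι 𝕜} (hM : M.PosDef) (hS : S.IsHermitian) {lam : 𝕜} {v : ι → 𝕜}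
    (hv : v ≠ 0) (h : M *ᵥ v = lam • S *ᵥ v) :
    RCLike.im lam = 0 := by
  have hquad : star v ⬝ᵥ M *ᵥ v = lam * (star v ⬝ᵥ S *ᵥ v) := by
    rw [h, dotProduct_smul, smul_eq_mul]
  have hpos := hM.re_dotProduct_pos hv
  have hM_im := hM.isHermitian.im_star_dotProduct_mulVec_self v
  have hS_im := hS.im_star_dotProduct_mulVec_self v
  rw [hquad] at hpos hM_im
  rw [RCLike.mul_re, hS_im, mul_zero, sub_zero] at hpos
  rw [RCLike.mul_im, hS_im, mul_zero, zero_add] at hM_im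
  exact (mul_eq_zero.mp hM_im).resolve_right (right_ne_zero_of_mul hpos.ne')

section Blocks

variable {m R : Type*} [DecidableEq m]

theorem fromBlocks_one_zero_zero_neg_one_mul [Fintype m] [Ring R] (A B C D : Matrix m m R) :
    fromBlocks 1 0 0 (-1) * fromBlocks A B C D = fromBlocks A B (-C) (-D) := by
  simp [fromBlocks_multiply]

theorem fromBlocks_one_zero_zero_neg_one_mul_self [Fintype m] [Ring R] :
    (fromBlocks 1 0 0 (-1) : Matrix (m ⊕ m) (m ⊕ m) R) * fromBlocks 1 0 0 (-1) = 1 := by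
  rw [fromBlocks_one_zero_zero_neg_one_mul, neg_zero, neg_neg, fromBlocks_one]

theorem isHermitian_fromBlocks_one_zero_zero_neg_one [Ring R] [StarRing R] :
    (fromBlocks 1 0 0 (-1) : Matrix (m ⊕ m) (m ⊕ m) R).IsHermitian :=
  IsHermitian.fromBlocks isHermitian_one (by simp) isHermitian_one.neg

theorem fromBlocks_neg_mul_swap [Fintype m] [Ring R] (A B : Matrix m m R) :
    fromBlocks A B (-B) (-A) * fromBlocks 0 1 1 0 =
      -(fromBlocks 0 1 1 0 * fromBlocks A B (-B) (-A)) := by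
  simp [fromBlocks_multiply, fromBlocks_neg]

end Blocks

theorem mulVec_mulVec_eq_neg_smul_of_mul_eq_neg_mul {ι R : Type*} [Fintype ι] [CommRing R]
    {H F : Matrix ι ι R} (hHF : H * F = -(F * H)) {lam : R} {v : ι → R}
    (hv : H *ᵥ v = lam • v) : H *ᵥ (F *ᵥ v) = (-lam) • (F *ᵥ v) := by
  rw [mulVec_mulVec, hHF, neg_mulVec, ← mulVec_mulVec, hv, mulVec_smul, neg_smul]

end Matrix

theorem bse_form_one_real_eigenvalues_and_flip_general
    (n : ℕ) (A B : Matrix (Fin n) (Fin n) ℂ)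
    (H F : Matrix (Fin n ⊕ Fin n) (Fin n ⊕ Fin n) ℂ)
    (hH : H = fromBlocks A B (-B) (-A))
    (hF : F = fromBlocks 0 1 1 0)
    (hpd : (fromBlocks A B B A).PosDef) :
    (∀ (lam : ℂ) (v : Fin n ⊕ Fin n → ℂ), v ≠ 0 → H *ᵥ v = lam • v → lam.im = 0) ∧
    (∀ (lam : ℂ) (v : Fin n ⊕ Fin n → ℂ), H *ᵥ v = lam • v →
      H *ᵥ (F *ᵥ v) = (-lam) • (F *ᵥ v)) := by
  subst hH hF
  refine ⟨fun lam v hv hHv => ?_, fun lam v =>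
    mulVec_mulVec_eq_neg_smul_of_mul_eq_neg_mul (fromBlocks_neg_mul_swap A B)⟩
  have hM : fromBlocks A B B A = fromBlocks 1 0 0 (-1) * fromBlocks A B (-B) (-A) := by
    rw [← fromBlocks_one_zero_zero_neg_one_mul, ← Matrix.mul_assoc,
      fromBlocks_one_zero_zero_neg_one_mul_self, Matrix.one_mul]
  refine hpd.im_eq_zero_of_mulVec_eq_smul_mulVec
    isHermitian_fromBlocks_one_zero_zero_neg_one hv ?_
  rw [hM, ← mulVec_mulVec, hHv, mulVec_smul]

/-- For a BSE matrix of form I with positive definite BSE Hamiltonian, all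
eigenvalues are real, and flipping the two block components of an eigenvector
for `λ` gives an eigenvector for `-λ`. -/
theorem bse_form_one_real_eigenvalues_and_flip
    (n : ℕ) (A B : Matrix (Fin n) (Fin n) ℂ)
    (hA : A = Aᴴ) (hB : B = Bᴴ)
    (H F : Matrix (Fin n ⊕ Fin n) (Fin n ⊕ Fin n) ℂ)
    (hH : H = fromBlocks A B (-B) (-A))
    (hF : F = fromBlocks 0 1 1 0)
    (hpd : (fromBlocks A B B A).PosDef) :
    (∀ (lam : ℂ) (v : Fin n ⊕ Fin n → ℂ), v ≠ 0 → H *ᵥ v = lam • v → lam.im = 0) ∧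
    (∀ (lam : ℂ) (v : Fin n ⊕ Fin n → ℂ), H *ᵥ v = lam • v →
      H *ᵥ (F *ᵥ v) = (-lam) • (F *ᵥ v)) :=
  bse_form_one_real_eigenvalues_and_flip_general n A B H F hH hF hpd
end

section
/- Let H = [[A, B], [-Bᴴ, -Aᵀ]] be a BSE matrix of form II (A = Aᴴ, B = Bᵀ, A, B ∈ ℂ^{n×n}) such that Σ·H = [[A, B], [Bᴴ, Aᵀ]] is positive definite. Then every eigenvalue λ of H is real, and if v = (v⁽¹⁾, v⁽²⁾) ∈ ℂ^{2n} satisfies H·v = λ·v, then the vector y = (conj(v⁽²⁾), conj(v⁽¹⁾)), i.e. y = F·conj(v) with F = [[0, Iₙ], [Iₙ, 0]], satisfies H·y = (-λ)·y. -/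
/-!
Multiplying the eigenvalue equation `H v = λ v` by the Hermitian signature matrix `Σ` and pairing
with `v` gives `vᴴ (Σ H) v = λ · vᴴ Σ v`, where the left side is positive and `vᴴ Σ v` is real,
so `λ` is real. The block structure makes `H` anticommute with the flip `F` up to entrywise
conjugation, `H F = -F conj(H)`, so conjugating `H v = λ v` and applying `F` yields
`H (F conj(v)) = -conj(λ) F conj(v)`.
-/

open Matrix ComplexOrder

namespace Matrix

variable {ι : Type*} [Fintype ι]

theorem isSelfAdjoint_of_mulVec_eq_smul_of_posDef_mul {K : Type*} [Field K] [PartialOrder K]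
    [StarRing K] [StarOrderedRing K] {S H : Matrix ι ι K} (hS : S.IsHermitian)
    (hSH : (S * H).PosDef) {lam : K} {v : ι → K} (hv : v ≠ 0) (hev : H *ᵥ v = lam • v) :
    IsSelfAdjoint lam := by
  set q := star v ⬝ᵥ (S *ᵥ v)
  have hpq : star v ⬝ᵥ ((S * H) *ᵥ v) = lam * q := by
    rw [← mulVec_mulVec, hev, mulVec_smul, dotProduct_smul, smul_eq_mul]
  have hpos := hSH.dotProduct_mulVec_pos hv
  have hq : IsSelfAdjoint q := by
    rw [IsSelfAdjoint, ← star_dotProduct, star_mulVec, hS.eq, ← dotProduct_mulVec]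
  have hq0 : q ≠ 0 := by
    rintro hq0
    rw [hpq, hq0, mul_zero] at hpos
    exact hpos.ne rfl
  have hp : IsSelfAdjoint (lam * q) := hpq ▸ IsSelfAdjoint.of_nonneg hpos.le
  refine mul_right_cancel₀ hq0 ?_
  rw [← hq.star_eq, ← star_mul', hp.star_eq, hq.star_eq]

theorem mulVec_mulVec_star_of_mul_eq_neg {R : Type*} [CommRing R] [StarRing R]
    {H F : Matrix ι ι R} (hHF : H * F = -(F * H.map star)) {lam : R} {v : ι → R}
    (hev : H *ᵥ v = lam • v) :
    H *ᵥ (F *ᵥ star v) = (-star lam) • (F *ᵥ star v) := by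
  have hconj : H.map star *ᵥ star v = star lam • star v := by
    rw [← conjTranspose_transpose, mulVec_transpose, ← star_mulVec, hev, star_smul]
  rw [mulVec_mulVec, hHF, neg_mulVec, ← mulVec_mulVec, hconj, mulVec_smul, neg_smul]

variable [DecidableEq ι]

theorem fromBlocks_signature_mul_fromBlocks {R : Type*} [Ring R] [StarRing R]
    (A B : Matrix ι ι R) :
    fromBlocks 1 0 0 (-1) * fromBlocks A B (-Bᴴ) (-Aᵀ) = fromBlocks A B Bᴴ Aᵀ := by
  simp [fromBlocks_multiply]

theorem fromBlocks_mul_fromBlocks_flip {R : Type*} [CommRing R] [StarRing R]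
    {A B : Matrix ι ι R} (hA : A = Aᴴ) (hB : B = Bᵀ) :
    fromBlocks A B (-Bᴴ) (-Aᵀ) * fromBlocks 0 1 1 0 =
      -(fromBlocks 0 1 1 0 * (fromBlocks A B (-Bᴴ) (-Aᵀ)).map star) := by
  have hAconj : A.map star = Aᵀ := by rw [← conjTranspose_transpose, ← hA]
  have hBconj : B.map star = Bᴴ := by rw [← transpose_conjTranspose, ← hB]
  have hAtconj : Aᵀ.map star = A := by rw [← transpose_conjTranspose, transpose_transpose, ← hA]
  have hBhconj : Bᴴ.map star = B := by
    rw [← conjTranspose_transpose, conjTranspose_conjTranspose, ← hB]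
  rw [fromBlocks_map, Matrix.map_neg _ star_neg, Matrix.map_neg _ star_neg, hAconj, hBconj,
    hAtconj, hBhconj]
  simp [fromBlocks_multiply, fromBlocks_neg]

end Matrix

/-- For a BSE matrix of form II with positive definite BSE Hamiltonian, all
eigenvalues are real, and flipping and conjugating the two block components of
an eigenvector for `λ` gives an eigenvector for `-λ`. -/
theorem bse_form_two_real_eigenvalues_and_flip
    (n : ℕ) (A B : Matrix (Fin n) (Fin n) ℂ)
    (hA : A = Aᴴ) (hB : B = Bᵀ)
    (H F : Matrix (Fin n ⊕ Fin n) (Fin n ⊕ Fin n) ℂ)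
    (hH : H = fromBlocks A B (-Bᴴ) (-Aᵀ))
    (hF : F = fromBlocks 0 1 1 0)
    (hpd : (fromBlocks A B Bᴴ Aᵀ).PosDef) :
    (∀ (lam : ℂ) (v : Fin n ⊕ Fin n → ℂ), v ≠ 0 → H *ᵥ v = lam • v → lam.im = 0) ∧
    (∀ (lam : ℂ) (v : Fin n ⊕ Fin n → ℂ), H *ᵥ v = lam • v →
      H *ᵥ (F *ᵥ star v) = (-lam) • (F *ᵥ star v)) := by
  have hsig : (fromBlocks 1 0 0 (-1) : Matrix (Fin n ⊕ Fin n) (Fin n ⊕ Fin n) ℂ).IsHermitian :=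
    isHermitian_one.fromBlocks (by simp) isHermitian_one.neg
  have hreal : ∀ (lam : ℂ) (v : Fin n ⊕ Fin n → ℂ), v ≠ 0 → H *ᵥ v = lam • v →
      star lam = lam := fun lam v hv hev =>
    isSelfAdjoint_of_mulVec_eq_smul_of_posDef_mul hsig
      (by rwa [hH, fromBlocks_signature_mul_fromBlocks]) hv hev
  refine ⟨fun lam v hv hev => Complex.conj_eq_iff_im.mp (hreal lam v hv hev),
    fun lam v hev => ?_⟩
  obtain rfl | hv := eq_or_ne v 0
  · simp
  rw [mulVec_mulVec_star_of_mul_eq_neg (hH ▸ hF ▸ fromBlocks_mul_fromBlocks_flip hA hB) hev,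
    hreal lam v hv hev]
end

section
/- Let A, B ∈ ℂ^{n×n} with A = Aᴴ, B = Bᴴ, and set M₁ = A+B, M₂ = A-B. Suppose v₁, v₂, w₁, w₂ ∈ ℂⁿ and positive real numbers λ₁, λ₂, γ₁, γ₂ satisfy M₁·v₂ = λ₁·v₁, M₂·v₁ = λ₂·v₂, M₁·w₂ = γ₁·w₁, M₂·w₁ = γ₂·w₂, and λ₁λ₂ ≠ γ₁γ₂. Define v_λ = ( (x_λ+y_λ)/2, (y_λ-x_λ)/2 ) with x_λ = λ₁^{1/4}λ₂^{-1/4}·v₁, y_λ = λ₁^{-1/4}λ₂^{1/4}·v₂, and define v_γ analogously from w₁, w₂, γ₁, γ₂. Then v_λᴴ·Σ·v_γ = 0, where Σ = [[Iₙ, 0], [0, -Iₙ]]. -/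
open Matrix

/-- Σ-orthogonality of constructed eigenvectors corresponding to distinct
eigenvalues `λ₁λ₂ ≠ γ₁γ₂` of the product `M₁ M₂`. -/
theorem bse_form_one_eigvecs_sigma_orthogonal
    (n : ℕ) (A B : Matrix (Fin n) (Fin n) ℂ)
    (hA : A = Aᴴ) (hB : B = Bᴴ)
    (M₁ M₂ : Matrix (Fin n) (Fin n) ℂ)
    (hM₁ : M₁ = A + B) (hM₂ : M₂ = A - B)
    (v₁ v₂ w₁ w₂ : Fin n → ℂ) (lam₁ lam₂ gam₁ gam₂ : ℝ)
    (hlam₁ : 0 < lam₁) (hlam₂ : 0 < lam₂)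
    (hgam₁ : 0 < gam₁) (hgam₂ : 0 < gam₂)
    (h₁ : M₁ *ᵥ v₂ = (lam₁ : ℂ) • v₁)
    (h₂ : M₂ *ᵥ v₁ = (lam₂ : ℂ) • v₂)
    (h₃ : M₁ *ᵥ w₂ = (gam₁ : ℂ) • w₁)
    (h₄ : M₂ *ᵥ w₁ = (gam₂ : ℂ) • w₂)
    (hne : lam₁ * lam₂ ≠ gam₁ * gam₂)
    (xlam ylam xgam ygam : Fin n → ℂ)
    (hxl : xlam = ((lam₁ ^ ((1:ℝ)/4) * lam₂ ^ (-(1:ℝ)/4) : ℝ) : ℂ) • v₁)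
    (hyl : ylam = ((lam₁ ^ (-(1:ℝ)/4) * lam₂ ^ ((1:ℝ)/4) : ℝ) : ℂ) • v₂)
    (hxg : xgam = ((gam₁ ^ ((1:ℝ)/4) * gam₂ ^ (-(1:ℝ)/4) : ℝ) : ℂ) • w₁)
    (hyg : ygam = ((gam₁ ^ (-(1:ℝ)/4) * gam₂ ^ ((1:ℝ)/4) : ℝ) : ℂ) • w₂)
    (vlam vgam : Fin n ⊕ Fin n → ℂ)
    (hvlam : vlam = Sum.elim ((1/2 : ℂ) • (xlam + ylam)) ((1/2 : ℂ) • (ylam - xlam)))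
    (hvgam : vgam = Sum.elim ((1/2 : ℂ) • (xgam + ygam)) ((1/2 : ℂ) • (ygam - xgam)))
    (Sgm : Matrix (Fin n ⊕ Fin n) (Fin n ⊕ Fin n) ℂ)
    (hS : Sgm = fromBlocks 1 0 0 (-1)) :
    star vlam ⬝ᵥ (Sgm *ᵥ vgam) = 0 := by
  have hM₁h : M₁ᴴ = M₁ := by rw [hM₁, conjTranspose_add, ← hA, ← hB]
  have hM₂h : M₂ᴴ = M₂ := by rw [hM₂, conjTranspose_sub, ← hA, ← hB]
  set a := star v₁ ⬝ᵥ w₂ with ha'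
  set b := star v₂ ⬝ᵥ w₁ with hb'
  have key1 : (lam₁ : ℂ) * a = (gam₁ : ℂ) * b := by
    have e1 : star (M₁ *ᵥ v₂) ⬝ᵥ w₂ = star v₂ ⬝ᵥ (M₁ *ᵥ w₂) := by
      rw [star_mulVec, hM₁h, dotProduct_mulVec]
    rw [h₁, h₃] at e1
    simpa [star_smul, smul_dotProduct, dotProduct_smul, Complex.star_def,
      Complex.conj_ofReal, smul_eq_mul, ha', hb'] using e1
  have key2 : (lam₂ : ℂ) * b = (gam₂ : ℂ) * a := by
    have e2 : star (M₂ *ᵥ v₁) ⬝ᵥ w₁ = star v₁ ⬝ᵥ (M₂ *ᵥ w₁) := by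
      rw [star_mulVec, hM₂h, dotProduct_mulVec]
    rw [h₂, h₄] at e2
    simpa [star_smul, smul_dotProduct, dotProduct_smul, Complex.star_def,
      Complex.conj_ofReal, smul_eq_mul, ha', hb'] using e2
  have hneC : ((lam₁ : ℂ) * lam₂ - (gam₁ : ℂ) * gam₂) ≠ 0 := by
    intro h
    apply hne
    have : ((lam₁ * lam₂ : ℝ) : ℂ) = ((gam₁ * gam₂ : ℝ) : ℂ) := by
      push_cast; linear_combination h
    exact_mod_cast this
  have hab : a * b = 0 := by
    have : ((lam₁ : ℂ) * lam₂ - (gam₁ : ℂ) * gam₂) * (a * b) = 0 := by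
      linear_combination ((lam₂ : ℂ) * b) * key1 + ((gam₁ : ℂ) * b) * key2
    exact (mul_eq_zero.mp this).resolve_left hneC
  have ha0 : a = 0 := by
    rcases mul_eq_zero.mp hab with h | h
    · exact h
    · have := key1
      rw [h, mul_zero] at this
      exact (mul_eq_zero.mp this).resolve_left (by exact_mod_cast hlam₁.ne')
  have hb0 : b = 0 := by
    rcases mul_eq_zero.mp hab with h | h
    · have := key2
      rw [h, mul_zero] at this
      exact (mul_eq_zero.mp this).resolve_left (by exact_mod_cast hlam₂.ne')
    · exact h
  subst hvlam hvgam hS hxl hyl hxg hyg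
  have hsplit : ∀ (f g x y : Fin n → ℂ),
      star (Sum.elim f g) ⬝ᵥ (fromBlocks (1 : Matrix (Fin n) (Fin n) ℂ) 0 0 (-1) *ᵥ Sum.elim x y)
        = star f ⬝ᵥ x - star g ⬝ᵥ y := by
    intro f g x y
    simp [fromBlocks_mulVec, dotProduct, Fintype.sum_sum_type, sub_eq_add_neg,
      neg_mulVec, one_mulVec, Pi.neg_apply, mul_neg, Finset.sum_neg_distrib]
  rw [hsplit]
  simp only [star_smul, star_add, star_sub, smul_dotProduct, dotProduct_smul,
    dotProduct_add, dotProduct_sub, add_dotProduct, sub_dotProduct,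
    smul_eq_mul, Complex.star_def, Complex.conj_ofReal, map_div₀, _root_.map_one,
    map_ofNat, ← ha', ← hb']
  rw [ha0, hb0]
  ring
end

section
/- Let M₁, M₂ ∈ ℂ^{n×n} and let L₁, L₂ ∈ ℂ^{n×n} satisfy L₁·L₁ᴴ = M₁ and L₂·L₂ᴴ = M₂. Suppose L₁ᴴ·L₂ = U·Λ·Vᴴ is a singular value decomposition: U and V are unitary (Uᴴ·U = Iₙ, Vᴴ·V = Iₙ) and Λ = diag(s₁,…,sₙ) is diagonal with positive real entries sᵢ > 0. Let Λ^{-1/2} = diag(s₁^{-1/2},…,sₙ^{-1/2}). Then the matrices V₁ = L₁·U·Λ^{-1/2} and V₂ = L₂·V·Λ^{-1/2} satisfy: V₁ᴴ·V₂ = Iₙ, M₂·V₁ = V₂·Λ, and M₁·V₂ = V₁·Λ. -/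
/-! With `S = Λ^{-1/2}`, the three identities follow from the SVD `L₁ᴴ L₂ = U Λ Vᴴ` and its
adjoint `L₂ᴴ L₁ = V Λ Uᴴ` using only `Uᴴ U = Vᴴ V = 1`, `Sᴴ = S`, `S Λ = Λ S` and `S Λ S = 1`,
an argument valid in any star monoid. -/

open Matrix

section StarMonoid

variable {R : Type*} [Monoid R] [StarMul R] {L₁ L₂ U V Λ S : R}

theorem star_mul_eq_of_star_mul_eq (hΛ : IsSelfAdjoint Λ) (h : star L₁ * L₂ = U * Λ * star V) :
    star L₂ * L₁ = V * Λ * star U := by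
  simpa only [star_mul, star_star, hΛ.star_eq, mul_assoc] using congrArg star h

theorem star_mul_mul_eq_one_of_star_mul_eq (h : star L₁ * L₂ = U * Λ * star V)
    (hU : star U * U = 1) (hV : star V * V = 1) (hS : IsSelfAdjoint S) (hSΛS : S * Λ * S = 1) :
    star (L₁ * U * S) * (L₂ * V * S) = 1 := calc
  _ = S * star U * (star L₁ * L₂) * V * S := by simp only [star_mul, hS.star_eq, mul_assoc]
  _ = S * (star U * U) * Λ * (star V * V) * S := by rw [h]; simp only [mul_assoc]
  _ = 1 := by rw [hU, hV, mul_one, mul_one, hSΛS]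

theorem mul_star_mul_eq_of_star_mul_eq (h : star L₁ * L₂ = U * Λ * star V)
    (hV : star V * V = 1) (hSΛ : Commute S Λ) :
    L₁ * star L₁ * (L₂ * V * S) = L₁ * U * S * Λ := calc
  _ = L₁ * (star L₁ * L₂) * V * S := by simp only [mul_assoc]
  _ = L₁ * U * Λ * (star V * V) * S := by rw [h]; simp only [mul_assoc]
  _ = L₁ * U * S * Λ := by rw [hV, mul_one, mul_assoc _ Λ, ← hSΛ.eq]; simp only [mul_assoc]

end StarMonoid

namespace Matrix

variable {n 𝕜 : Type*} [DecidableEq n] [RCLike 𝕜]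

theorem isSelfAdjoint_diagonal_ofReal (d : n → ℝ) : IsSelfAdjoint (diagonal fun i => (d i : 𝕜)) :=
  isHermitian_diagonal_iff.2 fun i => RCLike.conj_ofReal (d i)

theorem diagonal_inv_sqrt_mul_diagonal_mul_diagonal_inv_sqrt [Fintype n] {s : n → ℝ}
    (hs : ∀ i, 0 < s i) :
    (diagonal fun i => (((√(s i))⁻¹ : ℝ) : 𝕜)) * (diagonal fun i => (s i : 𝕜)) *
      (diagonal fun i => (((√(s i))⁻¹ : ℝ) : 𝕜)) = 1 := by
  simp only [diagonal_mul_diagonal, ← RCLike.ofReal_mul, ← diagonal_one]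
  congr 1
  funext i
  rw [mul_comm _ (s i), mul_assoc, ← mul_inv, Real.mul_self_sqrt (hs i).le,
    mul_inv_cancel₀ (hs i).ne', RCLike.ofReal_one]

end Matrix

/-- SVD approach: given Cholesky-type factorizations `M₁ = L₁ L₁ᴴ`,
`M₂ = L₂ L₂ᴴ` and an SVD `L₁ᴴ L₂ = U Λ Vᴴ` with `U, V` unitary and positive
singular values, `V₁ = L₁ U Λ^{-1/2}` and `V₂ = L₂ V Λ^{-1/2}` satisfy
`V₁ᴴ V₂ = I`, `M₂ V₁ = V₂ Λ` and `M₁ V₂ = V₁ Λ`. -/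
theorem svd_approach_eigvecs
    (n : ℕ) (M₁ M₂ L₁ L₂ : Matrix (Fin n) (Fin n) ℂ)
    (h₁ : L₁ * L₁ᴴ = M₁) (h₂ : L₂ * L₂ᴴ = M₂)
    (U V : Matrix (Fin n) (Fin n) ℂ)
    (hU : Uᴴ * U = 1) (hV : Vᴴ * V = 1)
    (s : Fin n → ℝ) (hs : ∀ i, 0 < s i)
    (Lam : Matrix (Fin n) (Fin n) ℂ)
    (hLam : Lam = Matrix.diagonal fun i => ((s i : ℝ) : ℂ))
    (hsvd : L₁ᴴ * L₂ = U * Lam * Vᴴ)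
    (LamInvSqrt : Matrix (Fin n) (Fin n) ℂ)
    (hLamInvSqrt : LamInvSqrt = Matrix.diagonal fun i => (((Real.sqrt (s i))⁻¹ : ℝ) : ℂ))
    (V₁ V₂ : Matrix (Fin n) (Fin n) ℂ)
    (hV₁ : V₁ = L₁ * U * LamInvSqrt) (hV₂ : V₂ = L₂ * V * LamInvSqrt) :
    V₁ᴴ * V₂ = 1 ∧ M₂ * V₁ = V₂ * Lam ∧ M₁ * V₂ = V₁ * Lam := by
  subst h₁ h₂ hV₁ hV₂ hLam hLamInvSqrt
  have hSΛ := commute_diagonal (fun i => (((√(s i))⁻¹ : ℝ) : ℂ)) fun i => (s i : ℂ)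
  exact ⟨star_mul_mul_eq_one_of_star_mul_eq hsvd hU hV (isSelfAdjoint_diagonal_ofReal _)
      (diagonal_inv_sqrt_mul_diagonal_mul_diagonal_inv_sqrt hs),
    mul_star_mul_eq_of_star_mul_eq
      (star_mul_eq_of_star_mul_eq (isSelfAdjoint_diagonal_ofReal s) hsvd) hU hSΛ,
    mul_star_mul_eq_of_star_mul_eq hsvd hV hSΛ⟩
end
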